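/- arXiv:2001.09862 — 4 statements merged into one kernel-verified Lean document; each statement's English description precedes it below -/
import Mathlib

section
/- Let $R$ be a commutative ring with identity and $M$ an $R$-module. For submodules $N$ and $K$ of $M$, define the product $NK = (N:M)(K:M)M$ where $(N:M) = \{r \in R : rM \subseteq N\}$. Then $V(N) \cup V(K) = V(N \cap K) = V(NK) = V^*(NK)$, where $V(N) = \{P \in Spec(M) : (P:M) \supseteq (N:M)\}$ and $V^*(N) = \{P \in Spec(M) : P \supseteq N\}$. -/
open Submodule

section Defs
variable (R : Type*) [CommRing R] {M : Type*} [AddCommGroup M] [Module R M]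

/-- `(N : M)`, the colon ideal of a submodule with the whole module. -/
def colonTop (N : Submodule R M) : Ideal R := N.colon ⊤

variable {R}

/-- A prime submodule. -/
def IsPrimeSubmodule (P : Submodule R M) : Prop :=
  P ≠ ⊤ ∧ ∀ (r : R) (m : M), r • m ∈ P → r ∈ colonTop R P ∨ m ∈ P

/-- The prime spectrum of a module, as a set of submodules. -/
def specSet (R : Type*) [CommRing R] (M : Type*) [AddCommGroup M] [Module R M] :
    Set (Submodule R M) := {P | IsPrimeSubmodule P}

/-- `V(N)`. -/
def Vset (N : Submodule R M) : Set (Submodule R M) :=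
  {P | IsPrimeSubmodule P ∧ colonTop R N ≤ colonTop R P}

/-- `V^*(N)`. -/
def VstarSet (N : Submodule R M) : Set (Submodule R M) :=
  {P | IsPrimeSubmodule P ∧ N ≤ P}

/-- The product `NK = (N:M)(K:M)M` of two submodules. -/
def prodSub (N K : Submodule R M) : Submodule R M :=
  (colonTop R N * colonTop R K) • (⊤ : Submodule R M)

/-- The prime radical of a submodule. -/
def radicalSub (N : Submodule R M) : Submodule R M :=
  sInf {P | IsPrimeSubmodule P ∧ N ≤ P}

/-- Adjacency in the Zariski topology-graph `G(τ_T)`. -/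
def ZAdj (T : Set (Submodule R M)) (N L : Submodule R M) : Prop :=
  N ≠ L ∧ N ≠ ⊤ ∧ L ≠ ⊤ ∧ Vset N ∪ Vset L = T ∧ Vset N ≠ T ∧ Vset L ≠ T

/-- Vertices of the Zariski topology-graph `G(τ_T)`. -/
def ZVertex (T : Set (Submodule R M)) (N : Submodule R M) : Prop :=
  ∃ K, ZAdj T N K

/-- The Zariski topology-graph `G(τ_T)` as a simple graph on its vertex set. -/
def ZGraph (T : Set (Submodule R M)) : SimpleGraph {N : Submodule R M // ZVertex T N} where
  Adj a b := ZAdj T a.1 b.1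
  symm := by
    constructor
    rintro a b ⟨h1, h2, h3, h4, h5, h6⟩
    exact ⟨h1.symm, h3, h2, by rwa [Set.union_comm], h6, h5⟩
  loopless := by constructor; rintro a ⟨h1, -⟩; exact h1 rfl

end Defs
section Extra
variable {R : Type*} [CommRing R] {M : Type*} [AddCommGroup M] [Module R M]

/-- Prime submodule of a submodule `W`, internal version (i.e. a prime submodule of the
module `W`). -/
def IsPrimeIn (W P : Submodule R M) : Prop :=
  P < W ∧ ∀ (r : R) (m : M), m ∈ W → r • m ∈ P → (∀ x ∈ W, r • x ∈ P) ∨ m ∈ P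

/-- The prime radical of `N` computed inside the submodule `W`. -/
def radicalIn (W N : Submodule R M) : Submodule R M :=
  sInf {P | IsPrimeIn W P ∧ N ≤ P} ⊓ W

/-- Vertices of the graph `AG(M)^*`. -/
def AGstarVertex (N : Submodule R M) : Prop :=
  N ≠ ⊤ ∧ colonTop R N ≠ Module.annihilator R M ∧
    ∃ K, K ≠ ⊤ ∧ colonTop R K ≠ Module.annihilator R M ∧ prodSub N K = ⊥

/-- Adjacency in the graph `AG(M)^*`. -/
def AGstarAdj (N L : Submodule R M) : Prop :=
  N ≠ L ∧ AGstarVertex N ∧ AGstarVertex L ∧ prodSub N L = ⊥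

/-- The clique number of a graph, valued in `ℕ∞`. -/
noncomputable def cliqueNumE {V : Type*} (G : SimpleGraph V) : ℕ∞ :=
  ⨆ n ∈ {n : ℕ | ∃ s, G.IsNClique n s}, (n : ℕ∞)

end Extra
section Aux
variable {R : Type*} [CommRing R] {M : Type*} [AddCommGroup M] [Module R M]

lemma colonTop_mono {N K : Submodule R M} (h : N ≤ K) : colonTop R N ≤ colonTop R K := by
  intro r hr
  rw [colonTop, Submodule.mem_colon] at hr ⊢
  exact fun p hp => h (hr p hp)

lemma colonTop_smul_le (N : Submodule R M) : colonTop R N • (⊤ : Submodule R M) ≤ N := by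
  refine Submodule.smul_le.2 fun r hr m hm => ?_
  rw [colonTop, Submodule.mem_colon] at hr
  exact hr m hm

lemma le_colonTop_smul (I : Ideal R) : I ≤ colonTop R (I • (⊤ : Submodule R M)) := by
  intro r hr
  rw [colonTop, Submodule.mem_colon]
  exact fun p hp => Submodule.smul_mem_smul hr trivial

lemma colonTop_isPrime {P : Submodule R M} (hP : IsPrimeSubmodule P) :
    (colonTop R P).IsPrime := by
  constructor
  · intro h
    apply hP.1
    rw [eq_top_iff]
    intro m _
    have : (1 : R) ∈ colonTop R P := h ▸ trivial
    rw [colonTop, Submodule.mem_colon] at this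
    simpa using this m trivial
  · intro a b hab
    by_cases ha : a ∈ colonTop R P
    · exact Or.inl ha
    · right
      rw [colonTop, Submodule.mem_colon] at hab ⊢
      intro p hp
      have := hab p hp
      rw [mul_smul] at this
      rcases hP.2 a (b • p) this with h | h
      · exact absurd h ha
      · exact h

lemma mem_V_union_iff {N K P : Submodule R M} (hP : IsPrimeSubmodule P) :
    (colonTop R N ≤ colonTop R P ∨ colonTop R K ≤ colonTop R P) ↔
      colonTop R N * colonTop R K ≤ colonTop R P := by
  constructor
  · rintro (h | h)
    · exact le_trans Ideal.mul_le_left h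
    · exact le_trans Ideal.mul_le_right h
  · intro h
    exact (colonTop_isPrime hP).mul_le.mp h

end Aux

/-- `V(N) ∪ V(K) = V(N ⊓ K) = V(NK) = V*(NK)`. -/
theorem stmt0 {R : Type*} [CommRing R] {M : Type*} [AddCommGroup M] [Module R M]
    (N K : Submodule R M) :
    Vset (N ⊓ K) = Vset N ∪ Vset K ∧ Vset (prodSub N K) = Vset N ∪ Vset K ∧
      VstarSet (prodSub N K) = Vset N ∪ Vset K := by
  have hstar : ∀ P : Submodule R M, IsPrimeSubmodule P →
      (prodSub N K ≤ P ↔ colonTop R N ≤ colonTop R P ∨ colonTop R K ≤ colonTop R P) := by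
    intro P hP
    constructor
    · intro h
      apply (mem_V_union_iff hP).2
      exact le_trans (le_colonTop_smul _) (colonTop_mono h)
    · rintro (h | h)
      · calc prodSub N K ≤ colonTop R N • (⊤ : Submodule R M) :=
              Submodule.smul_mono_left Ideal.mul_le_left
          _ ≤ colonTop R P • (⊤ : Submodule R M) := Submodule.smul_mono_left h
          _ ≤ P := colonTop_smul_le P
      · calc prodSub N K ≤ colonTop R K • (⊤ : Submodule R M) :=
              Submodule.smul_mono_left Ideal.mul_le_right
          _ ≤ colonTop R P • (⊤ : Submodule R M) := Submodule.smul_mono_left h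
          _ ≤ P := colonTop_smul_le P
  refine ⟨?_, ?_, ?_⟩
  · ext P
    simp only [Vset, Set.mem_setOf_eq, Set.mem_union]
    constructor
    · rintro ⟨hP, h⟩
      have : colonTop R N * colonTop R K ≤ colonTop R P := by
        refine le_trans ?_ h
        refine le_trans Ideal.mul_le_inf ?_
        intro r hr
        rw [colonTop, Submodule.mem_colon] at *
        exact fun p hp => ⟨(Submodule.mem_colon.1 hr.1) p hp, (Submodule.mem_colon.1 hr.2) p hp⟩
      rcases (mem_V_union_iff hP).2 this with h' | h'
      · exact Or.inl ⟨hP, h'⟩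
      · exact Or.inr ⟨hP, h'⟩
    · rintro (⟨hP, h⟩ | ⟨hP, h⟩)
      · exact ⟨hP, le_trans (colonTop_mono inf_le_left) h⟩
      · exact ⟨hP, le_trans (colonTop_mono inf_le_right) h⟩
  · ext P
    simp only [Vset, Set.mem_setOf_eq, Set.mem_union]
    constructor
    · rintro ⟨hP, h⟩
      have h2 : colonTop R N * colonTop R K ≤ colonTop R P :=
        le_trans (le_colonTop_smul _) h
      rcases (mem_V_union_iff hP).2 h2 with h' | h'
      · exact Or.inl ⟨hP, h'⟩
      · exact Or.inr ⟨hP, h'⟩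
    · rintro (⟨hP, h⟩ | ⟨hP, h⟩)
      · exact ⟨hP, colonTop_mono ((hstar P hP).2 (Or.inl h))⟩
      · exact ⟨hP, colonTop_mono ((hstar P hP).2 (Or.inr h))⟩
  · ext P
    simp only [VstarSet, Vset, Set.mem_setOf_eq, Set.mem_union]
    constructor
    · rintro ⟨hP, h⟩
      rcases (hstar P hP).1 h with h' | h'
      · exact Or.inl ⟨hP, h'⟩
      · exact Or.inr ⟨hP, h'⟩
    · rintro (⟨hP, h⟩ | ⟨hP, h⟩)
      · exact ⟨hP, (hstar P hP).2 (Or.inl h)⟩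
      · exact ⟨hP, (hstar P hP).2 (Or.inr h)⟩
end

section
/- Let $R$ be a commutative ring, $M$ an $R$-module, $e$ an idempotent of $R$, and $N = N_1 \oplus N_2$ a submodule of $M = eM \oplus (1-e)M$ with $N_1 \leq eM$ and $N_2 \leq (1-e)M$. Then the prime radical of $N$ in $M$ satisfies $\sqrt{N} = \sqrt{N_1} \oplus \sqrt{N_2}$, where $\sqrt{N_i}$ is the radical of $N_i$ in $M_i$ as an $R_i$-module ($R_1 = eR$, $R_2 = (1-e)R$). -/
/-
An idempotent `e` splits every prime submodule `P` of `M`: since `e (1 - e) = 0`, primality forces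
`eM ≤ P` or `(1 - e)M ≤ P`. Hence the primes of `M` containing `N₁ ⊕ N₂` are exactly the submodules
`Q ⊕ (1 - e)M` and `eM ⊕ Q'` with `Q` prime in `eM` over `N₁` and `Q'` prime in `(1 - e)M` over
`N₂`. Intersecting them, the `eM`-component of `√N` is `√N₁` and the `(1 - e)M`-component is `√N₂`.
-/

open Submodule

section IdempotentComponents
variable {R : Type*} [CommRing R] {M : Type*} [AddCommGroup M] [Module R M]

lemma mem_colonTop_iff {P : Submodule R M} {r : R} : r ∈ colonTop R P ↔ ∀ m, r • m ∈ P := by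
  simp [colonTop, mem_colon]

lemma smul_mem_span_singleton_smul_top (e : R) (x : M) :
    e • x ∈ Ideal.span {e} • (⊤ : Submodule R M) :=
  smul_mem_smul (Ideal.mem_span_singleton_self e) trivial

lemma mem_span_singleton_smul_top_iff {e : R} (he : IsIdempotentElem e) {x : M} :
    x ∈ Ideal.span {e} • (⊤ : Submodule R M) ↔ e • x = x := by
  rw [ideal_span_singleton_smul, mem_smul_pointwise_iff_exists]
  constructor
  · rintro ⟨y, -, rfl⟩
    rw [smul_smul, he]
  · exact fun h => ⟨x, trivial, h⟩

lemma smul_one_sub_smul_eq_zero {e : R} (he : IsIdempotentElem e) (x : M) :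
    e • (1 - e) • x = 0 := by
  rw [smul_smul, mul_one_sub, he, sub_self, zero_smul]

lemma span_singleton_smul_top_sup_one_sub (e : R) :
    Ideal.span {e} • (⊤ : Submodule R M) ⊔ Ideal.span {1 - e} • ⊤ = ⊤ :=
  eq_top_iff.mpr fun x _ => smul_add_one_sub_smul (r := e) (m := x) ▸
    add_mem_sup (smul_mem_span_singleton_smul_top e x) (smul_mem_span_singleton_smul_top _ x)

lemma smul_mem_of_mem_sup_span_one_sub {e : R} (he : IsIdempotentElem e) {Q : Submodule R M}
    (hQ : Q ≤ Ideal.span {e} • ⊤) {x : M} (hx : x ∈ Q ⊔ Ideal.span {1 - e} • ⊤) :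
    e • x ∈ Q := by
  obtain ⟨a, ha, b, hb, rfl⟩ := mem_sup.mp hx
  have hea : e • a = a := (mem_span_singleton_smul_top_iff he).mp (hQ ha)
  have heb : e • b = 0 := by
    rw [← (mem_span_singleton_smul_top_iff he.one_sub).mp hb, smul_one_sub_smul_eq_zero he]
  rwa [smul_add, hea, heb, add_zero]

lemma IsPrimeSubmodule.span_singleton_smul_top_le_or {e : R} (he : IsIdempotentElem e)
    {P : Submodule R M} (hP : IsPrimeSubmodule P) :
    Ideal.span {e} • ⊤ ≤ P ∨ Ideal.span {1 - e} • ⊤ ≤ P := by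
  by_cases heP : e ∈ colonTop R P
  · left
    intro x hx
    rw [← (mem_span_singleton_smul_top_iff he).mp hx]
    exact mem_colonTop_iff.mp heP x
  · right
    intro x hx
    rw [← (mem_span_singleton_smul_top_iff he.one_sub).mp hx]
    have hzero : e • (1 - e) • x ∈ P := by
      rw [smul_one_sub_smul_eq_zero he]
      exact P.zero_mem
    exact (hP.2 e _ hzero).resolve_left heP

lemma IsPrimeSubmodule.isPrimeIn_inf {P W W' : Submodule R M} (hP : IsPrimeSubmodule P)
    (hWW' : W ⊔ W' = ⊤) (hW' : W' ≤ P) : IsPrimeIn W (P ⊓ W) := by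
  refine ⟨lt_of_le_of_ne inf_le_right fun h => hP.1 ?_, fun r m hm hrm => ?_⟩
  · rw [eq_top_iff, ← hWW']
    exact sup_le (inf_eq_right.mp h) hW'
  · rcases hP.2 r m hrm.1 with h | h
    · exact Or.inl fun x hx => ⟨mem_colonTop_iff.mp h x, W.smul_mem r hx⟩
    · exact Or.inr ⟨h, hm⟩

lemma IsPrimeIn.isPrimeSubmodule_sup_span_one_sub {e : R} (he : IsIdempotentElem e)
    {Q : Submodule R M} (hQ : IsPrimeIn (Ideal.span {e} • ⊤) Q) :
    IsPrimeSubmodule (Q ⊔ Ideal.span {1 - e} • ⊤) := by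
  have hQe := hQ.1.le
  refine ⟨fun htop => hQ.1.not_ge fun x hx => ?_, fun r m hrm => ?_⟩
  · have hex := smul_mem_of_mem_sup_span_one_sub he hQe (htop ▸ mem_top (x := x))
    rwa [(mem_span_singleton_smul_top_iff he).mp hx] at hex
  · have hrem : r • e • m ∈ Q := by
      rw [smul_comm]
      exact smul_mem_of_mem_sup_span_one_sub he hQe hrm
    rcases hQ.2 r (e • m) (smul_mem_span_singleton_smul_top e m) hrem with h | h
    · refine Or.inl (mem_colonTop_iff.mpr fun y => ?_)
      rw [← smul_add_one_sub_smul (r := e) (m := y), smul_add]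
      exact add_mem_sup (h _ (smul_mem_span_singleton_smul_top e y))
        (smul_mem _ r (smul_mem_span_singleton_smul_top _ y))
    · rw [← smul_add_one_sub_smul (r := e) (m := m)]
      exact Or.inr (add_mem_sup h (smul_mem_span_singleton_smul_top _ m))

lemma radicalSub_mono {N N' : Submodule R M} (h : N ≤ N') : radicalSub N ≤ radicalSub N' :=
  sInf_le_sInf fun _ hP => ⟨hP.1, h.trans hP.2⟩

lemma radicalIn_le_radicalSub {e : R} (he : IsIdempotentElem e) {N : Submodule R M}
    (hN : N ≤ Ideal.span {e} • ⊤) : radicalIn (Ideal.span {e} • ⊤) N ≤ radicalSub N := by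
  refine le_sInf ?_
  rintro P ⟨hP, hNP⟩
  rcases hP.span_singleton_smul_top_le_or he with h | h
  · exact inf_le_right.trans h
  · have hPe : IsPrimeIn (Ideal.span {e} • ⊤) (P ⊓ Ideal.span {e} • ⊤) :=
      hP.isPrimeIn_inf (span_singleton_smul_top_sup_one_sub e) h
    have hPN : P ⊓ Ideal.span {e} • ⊤ ∈ {Q | IsPrimeIn (Ideal.span {e} • ⊤) Q ∧ N ≤ Q} :=
      ⟨hPe, le_inf hNP hN⟩
    exact inf_le_left.trans ((sInf_le hPN).trans inf_le_left)

lemma smul_mem_radicalIn_of_mem_radicalSub {e : R} (he : IsIdempotentElem e)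
    {N₁ N₂ : Submodule R M} (hN₂ : N₂ ≤ Ideal.span {1 - e} • ⊤)
    {x : M} (hx : x ∈ radicalSub (N₁ ⊔ N₂)) :
    e • x ∈ radicalIn (Ideal.span {e} • ⊤) N₁ := by
  refine mem_inf.mpr ⟨mem_sInf.mpr ?_, smul_mem_span_singleton_smul_top e x⟩
  rintro Q ⟨hQ, hN₁Q⟩
  have hxQ : x ∈ Q ⊔ Ideal.span {1 - e} • ⊤ :=
    mem_sInf.mp hx _ ⟨hQ.isPrimeSubmodule_sup_span_one_sub he, sup_le_sup hN₁Q hN₂⟩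
  exact smul_mem_of_mem_sup_span_one_sub he hQ.1.le hxQ

end IdempotentComponents

/-- for `N = N₁ ⊕ N₂ ≤ eM ⊕ (1-e)M`, the prime radical satisfies
`√N = √N₁ ⊕ √N₂`, the radicals of the factors being computed in `eM` resp. `(1-e)M`. -/
theorem stmt2 {R : Type*} [CommRing R] {M : Type*} [AddCommGroup M] [Module R M]
    (e : R) (he : IsIdempotentElem e)
    (M1 M2 : Submodule R M)
    (hM1 : M1 = Ideal.span {e} • (⊤ : Submodule R M))
    (hM2 : M2 = Ideal.span {1 - e} • (⊤ : Submodule R M))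
    (N1 N2 : Submodule R M) (hN1 : N1 ≤ M1) (hN2 : N2 ≤ M2) :
    radicalSub (N1 ⊔ N2) = radicalIn M1 N1 ⊔ radicalIn M2 N2 := by
  subst hM1 hM2
  have hN₁' : N1 ≤ Ideal.span {1 - (1 - e)} • ⊤ := by rwa [sub_sub_cancel]
  apply le_antisymm
  · intro x hx
    rw [← smul_add_one_sub_smul (r := e) (m := x)]
    refine add_mem_sup (smul_mem_radicalIn_of_mem_radicalSub he hN2 hx) ?_
    rw [sup_comm] at hx
    exact smul_mem_radicalIn_of_mem_radicalSub he.one_sub hN₁' hx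
  · exact sup_le ((radicalIn_le_radicalSub he hN1).trans (radicalSub_mono le_sup_left))
      ((radicalIn_le_radicalSub he.one_sub hN2).trans (radicalSub_mono le_sup_right))
end

section
/- Let $R$ be a commutative ring, $M$ an $R$-module such that $Ann_R(M)$ is a nil ideal, and let $N$ be a minimal (nonzero) submodule of $M$. Then either $N^2 = (0)$ (i.e., $(N:M)^2 M = 0$) or $N = eM$ for some idempotent $e \in R$. -/
open Submodule

/-!
If `(N:M)N ≠ 0`, pick `a ∈ (N:M)` and `n ∈ N` with `an ≠ 0`. Minimality gives `N = Ran`, so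
`n = can`, and `b = ca ∈ (N:M)` acts as the identity on the cyclic module `N`. Since `bM ⊆ N`,
`b² - b` kills `M`, i.e. `b` is idempotent modulo the nil ideal `Ann(M)`; lift it to an
idempotent `e`. Then `e` acts on `M` as `b` does, so `eM = bM` lies in `N = bN = eN ⊆ eM`.
-/

namespace Submodule

theorem span_singleton_eq_of_isAtom {R M : Type*} [Semiring R] [AddCommMonoid M] [Module R M]
    {N : Submodule R M} (hN : IsAtom N) {n : M} (hn : n ∈ N) (hn0 : n ≠ 0) :
    span R {n} = N :=
  (hN.le_iff.mp (span_singleton_le_iff_mem n N |>.mpr hn)).resolve_left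
    (span_singleton_eq_bot.not.mpr hn0)

theorem exists_mem_forall_smul_eq_self_of_isAtom {R M : Type*} [CommSemiring R]
    [AddCommMonoid M] [Module R M] {N : Submodule R M} (hN : IsAtom N) {I : Ideal R}
    (hIN : I • N ≠ ⊥) : ∃ b ∈ I, ∀ n ∈ N, b • n = n := by
  obtain ⟨a, haI, n, hnN, han⟩ : ∃ a ∈ I, ∃ n ∈ N, a • n ≠ 0 := by
    by_contra! h
    exact hIN (eq_bot_iff.mpr (smul_le.mpr fun a ha n hn => (mem_bot R).mpr (h a ha n hn)))
  have hn0 : n ≠ 0 := by rintro rfl; exact han (smul_zero a)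
  obtain ⟨c, hc⟩ : ∃ c : R, c • a • n = n := mem_span_singleton.mp <|
    span_singleton_eq_of_isAtom hN (N.smul_mem a hnN) han ▸ hnN
  refine ⟨c * a, I.mul_mem_left c haI, fun m hm => ?_⟩
  obtain ⟨r, rfl⟩ := mem_span_singleton.mp (span_singleton_eq_of_isAtom hN hnN hn0 ▸ hm)
  rw [smul_comm, mul_smul, hc]

variable {R M : Type*} [CommRing R] [AddCommGroup M] [Module R M]

theorem colonTop_smul_top_le (N : Submodule R M) : colonTop R N • (⊤ : Submodule R M) ≤ N :=
  smul_le.mpr fun _ hr m _ => mem_colon.mp hr m trivial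

theorem prodSub_le_colonTop_smul (N K : Submodule R M) : prodSub N K ≤ colonTop R N • K := by
  rw [prodSub, Submodule.mul_smul]
  exact smul_mono_right _ (colonTop_smul_top_le K)

theorem eq_span_singleton_smul_top_of_forall_smul_eq_self {N : Submodule R M} {e : R}
    (he : e ∈ colonTop R N) (hid : ∀ n ∈ N, e • n = n) :
    N = Ideal.span {e} • (⊤ : Submodule R M) := by
  refine le_antisymm (fun n hn => hid n hn ▸ smul_mem_smul (Ideal.mem_span_singleton_self e)
    mem_top) (smul_le.mpr fun r hr m _ => ?_)
  obtain ⟨s, rfl⟩ := Ideal.mem_span_singleton'.mp hr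
  rw [mul_smul]
  exact N.smul_mem s (mem_colon.mp he m trivial)

end Submodule

theorem Ideal.exists_isIdempotentElem_sub_mem {R : Type*} [CommRing R] {J : Ideal R}
    (hJ : ∀ r ∈ J, IsNilpotent r) {b : R} (hb : b * b - b ∈ J) :
    ∃ e, IsIdempotentElem e ∧ e - b ∈ J := by
  obtain ⟨e, he, hfe⟩ := exists_isIdempotentElem_eq_of_ker_isNilpotent (Ideal.Quotient.mk J)
    (fun r hr => hJ r (Ideal.mk_ker (I := J) ▸ hr)) _ ⟨b, rfl⟩
    (by rw [IsIdempotentElem, ← map_mul, Ideal.Quotient.eq]; exact hb)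
  exact ⟨e, he, Ideal.Quotient.eq.mp hfe⟩

/-- if `Ann(M)` is nil and `N` is a minimal submodule of `M`, then
`N² = 0` or `N = eM` for some idempotent `e ∈ R`. -/
theorem stmt4 {R : Type*} [CommRing R] {M : Type*} [AddCommGroup M] [Module R M]
    (hnil : ∀ r ∈ Module.annihilator R M, IsNilpotent r)
    (N : Submodule R M) (hbot : N ≠ ⊥)
    (hmin : ∀ K : Submodule R M, K ≤ N → K = ⊥ ∨ K = N) :
    prodSub N N = ⊥ ∨
      ∃ e : R, IsIdempotentElem e ∧ N = Ideal.span {e} • (⊤ : Submodule R M) := by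
  refine or_iff_not_imp_left.mpr fun hsq => ?_
  have hN : IsAtom N := ⟨hbot, fun K hK => (hmin K hK.le).resolve_right hK.ne⟩
  obtain ⟨b, hbN, hb⟩ := exists_mem_forall_smul_eq_self_of_isAtom hN
    fun h => hsq (eq_bot_iff.mpr (h ▸ prodSub_le_colonTop_smul N N))
  have hbM : ∀ m : M, b • m ∈ N := fun m => mem_colon.mp hbN m trivial
  have hb_idem : b * b - b ∈ Module.annihilator R M := Module.mem_annihilator.mpr fun m => by
    rw [sub_smul, mul_smul, hb _ (hbM m), sub_self]
  obtain ⟨e, he, heb⟩ := Ideal.exists_isIdempotentElem_sub_mem hnil hb_idem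
  have hem : ∀ m : M, e • m = b • m := fun m =>
    sub_eq_zero.mp (by rw [← sub_smul]; exact Module.mem_annihilator.mp heb m)
  refine ⟨e, he, eq_span_singleton_smul_top_of_forall_smul_eq_self ?_ fun n hn => ?_⟩
  · exact mem_colon.mpr fun m _ => hem m ▸ hbM m
  · rw [hem, hb n hn]
end

section
/- Let $M$ be an $R$-module and $T \subseteq Spec(M)$ a finite set. Then the chromatic number $\chi(G(\tau_T))$ of the Zariski topology-graph is finite; indeed $\chi(G(\tau_T)) \leq |T|$. In particular the clique number $\omega(G(\tau_T))$ is finite. -/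
open Submodule

/-- if `T` is finite then `χ(G(τ_T)) ≤ |T|`; in particular
`ω(G(τ_T))` is finite. -/
theorem stmt12 {R : Type*} [CommRing R] {M : Type*} [AddCommGroup M] [Module R M]
    (T : Set (Submodule R M)) (hT : T.Nonempty) (hfin : T.Finite) :
    (ZGraph T).chromaticNumber ≤ (T.ncard : ℕ∞) ∧ cliqueNumE (ZGraph T) ≠ ⊤ := by
  classical
  have hfT : Fintype ↥T := hfin.fintype
  -- For each vertex, pick an element of T \ Vset N
  have hpick : ∀ v : {N : Submodule R M // ZVertex T N}, ∃ P, P ∈ T ∧ P ∉ Vset v.1 := by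
    rintro ⟨N, K, h1, h2, h3, h4, h5, h6⟩
    have hsub : Vset N ⊆ T := h4 ▸ Set.subset_union_left
    have : Vset N ⊂ T := hsub.lt_of_ne h5
    obtain ⟨P, hPT, hPN⟩ := Set.exists_of_ssubset this
    exact ⟨P, hPT, hPN⟩
  let f : {N : Submodule R M // ZVertex T N} → ↥T :=
    fun v => ⟨(hpick v).choose, (hpick v).choose_spec.1⟩
  have hvalid : ∀ {a b}, (ZGraph T).Adj a b → f a ≠ f b := by
    intro a b hadj heq
    obtain ⟨h1, h2, h3, h4, h5, h6⟩ := hadj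
    have hPa := (hpick a).choose_spec
    have hPb := (hpick b).choose_spec
    have hmem : (hpick a).choose ∈ Vset (a.1) ∪ Vset (b.1) := by rw [h4]; exact hPa.1
    have heq' : (hpick a).choose = (hpick b).choose := congrArg Subtype.val heq
    rcases hmem with h | h
    · exact hPa.2 h
    · exact hPb.2 (heq' ▸ h)
  let C : (ZGraph T).Coloring ↥T := SimpleGraph.Coloring.mk f fun h => hvalid h
  have hcard : Fintype.card ↥T = T.ncard := by
    rw [Set.ncard_eq_toFinset_card']
    simp [Set.toFinset_card]
  have hcol : (ZGraph T).Colorable T.ncard := hcard ▸ C.colorable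
  constructor
  · exact hcol.chromaticNumber_le
  · have hle : cliqueNumE (ZGraph T) ≤ (T.ncard : ℕ∞) := by
      refine iSup_le fun n => iSup_le fun hn => ?_
      obtain ⟨s, hs⟩ := hn
      have := hs.1.card_le_of_colorable hcol
      rw [hs.2] at this
      exact_mod_cast this
    exact lt_top_iff_ne_top.mp (lt_of_le_of_lt hle (lt_top_iff_ne_top.2 (by simp [hfin])))
end
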